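/- arXiv:1911.02534 — 2 statements merged into one kernel-verified Lean document; each statement's English description precedes it below -/
import Mathlib

section
/- Let $\dim U = k$, $\dim V = n$, and $\dim W > s = n(k-1) + r$. Then every tensor in $U \otimes V \otimes W$ of minrank at most $r$ lies in $U \otimes V \otimes W'$ for some subspace $W' \subseteq W$ of dimension $s$. Consequently, the set of tensors of minrank at most $r$ in $U \otimes V \otimes W$ is the union over all $s$-dimensional subspaces $W' \subseteq W$ of the sets of tensors of minrank at most $r$ in $U \otimes V \otimes W'$. -/
open TensorProduct

/-- An order-2 tensor `t ∈ V ⊗ W` has rank at most `r`. -/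
def Rank2LE {F V W : Type*} [Field F] [AddCommGroup V] [Module F V]
    [AddCommGroup W] [Module F W] (t : V ⊗[F] W) (r : ℕ) : Prop :=
  ∃ (v : Fin r → V) (w : Fin r → W), t = ∑ i, v i ⊗ₜ[F] w i

/-- Contraction of `T ∈ U ⊗ M` against `x ∈ U^*` in the first factor. -/
noncomputable def contractD {F U M : Type*} [Field F] [AddCommGroup U] [Module F U]
    [AddCommGroup M] [Module F M] (x : Module.Dual F U) : U ⊗[F] M →ₗ[F] M :=
  (TensorProduct.lid F M).toLinearMap.comp (TensorProduct.map x LinearMap.id)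

/-- `T ∈ U ⊗ V ⊗ W` has minrank at most `r`. -/
def MinrankLE {F U V W : Type*} [Field F] [AddCommGroup U] [Module F U]
    [AddCommGroup V] [Module F V] [AddCommGroup W] [Module F W]
    (T : U ⊗[F] (V ⊗[F] W)) (r : ℕ) : Prop :=
  ∃ x : Module.Dual F U, x ≠ 0 ∧ Rank2LE (contractD x T) r

open Module

section Aux

variable {F : Type*} [Field F]

@[simp] lemma contractD_tmul {U M : Type*} [AddCommGroup U] [Module F U]
    [AddCommGroup M] [Module F M] (x : Module.Dual F U) (u : U) (m : M) :
    contractD x (u ⊗ₜ[F] m) = x u • m := by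
  simp [contractD]

lemma contractD_map {U M N : Type*} [AddCommGroup U] [Module F U]
    [AddCommGroup M] [Module F M] [AddCommGroup N] [Module F N]
    (x : Module.Dual F U) (f : M →ₗ[F] N) (T : U ⊗[F] M) :
    contractD x (TensorProduct.map LinearMap.id f T) = f (contractD x T) := by
  induction T using TensorProduct.induction_on with
  | zero => simp
  | tmul u m => simp
  | add a b ha hb => simp [ha, hb]

lemma tensor_decomp {ι U M : Type*} [Fintype ι] [AddCommGroup U] [Module F U]
    [AddCommGroup M] [Module F M] (b : Basis ι F U) (T : U ⊗[F] M) :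
    T = ∑ j, b j ⊗ₜ[F] contractD (b.coord j) T := by
  induction T using TensorProduct.induction_on with
  | zero => simp
  | tmul u m =>
    have : ∀ j, b j ⊗ₜ[F] (b.coord j u • m) = (b.repr u j • b j) ⊗ₜ[F] m := fun j => by
      rw [TensorProduct.tmul_smul, TensorProduct.smul_tmul', Basis.coord_apply]
    simp only [contractD_tmul, this, ← TensorProduct.sum_tmul, b.sum_repr u]
  | add a b ha hb =>
    simp only [map_add, TensorProduct.tmul_add, Finset.sum_add_distrib, ← ha, ← hb]

lemma rank2LE_finrank {V W : Type*} [AddCommGroup V] [Module F V] [FiniteDimensional F V]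
    [AddCommGroup W] [Module F W] (t : V ⊗[F] W) : Rank2LE t (finrank F V) :=
  ⟨fun i => finBasis F V i, fun i => contractD ((finBasis F V).coord i) t,
    tensor_decomp (finBasis F V) t⟩

lemma map_smulRight_eq {U M : Type*} [AddCommGroup U] [Module F U]
    [AddCommGroup M] [Module F M] (x : Module.Dual F U) (u0 : U) (T : U ⊗[F] M) :
    TensorProduct.map (x.smulRight u0) LinearMap.id T = u0 ⊗ₜ[F] contractD x T := by
  induction T using TensorProduct.induction_on with
  | zero => simp
  | tmul u m =>
    simp only [TensorProduct.map_tmul, LinearMap.smulRight_apply, LinearMap.id_apply,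
      contractD_tmul, TensorProduct.smul_tmul]
  | add a b ha hb => simp [ha, hb, TensorProduct.tmul_add]

lemma exists_superspace {W : Type*} [AddCommGroup W] [Module F W] [FiniteDimensional F W]
    (p : Submodule F W) (s : ℕ) (h1 : finrank F p ≤ s) (h2 : s ≤ finrank F W) :
    ∃ q : Submodule F W, p ≤ q ∧ finrank F q = s := by
  obtain ⟨d, hd⟩ := Nat.exists_eq_add_of_le h1
  clear h1
  induction d generalizing p with
  | zero => exact ⟨p, le_rfl, by omega⟩
  | succ d ih =>
    have hlt : finrank F p < finrank F W := by omega
    have hne : p ≠ ⊤ := fun h => by rw [h, finrank_top] at hlt; omega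
    obtain ⟨v, hv⟩ : ∃ v, v ∉ p := by
      by_contra h; push_neg at h; exact hne (Submodule.eq_top_iff'.2 h)
    have hv0 : v ≠ 0 := fun h => hv (h ▸ p.zero_mem)
    have hdisj : Disjoint p (Submodule.span F {v}) :=
      (Submodule.disjoint_span_singleton' hv0).2 hv
    have hfr : finrank F ↥(p ⊔ Submodule.span F {v}) = finrank F p + 1 := by
      have := Submodule.finrank_sup_add_finrank_inf_eq p (Submodule.span F {v})
      rw [hdisj.eq_bot, finrank_bot, finrank_span_singleton hv0] at this
      omega
    obtain ⟨q, hq1, hq2⟩ := ih (p ⊔ Submodule.span F {v}) (by omega)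
    exact ⟨q, le_trans le_sup_left hq1, hq2⟩

end Aux

/-- If `dim U = k`, `dim V = n`, `dim W > s = n(k-1) + r`, then a tensor in
`U ⊗ V ⊗ W` has minrank at most `r` iff it lies in `U ⊗ V ⊗ W'` for some subspace
`W' ⊆ W` of dimension `s` and already has minrank at most `r` there; i.e. the minrank
variety is the union over all `s`-dimensional subspaces `W'` of the minrank varieties
of `U ⊗ V ⊗ W'`. -/
theorem stmt5 {F U V W : Type*} [Field F] [AddCommGroup U] [Module F U]
    [AddCommGroup V] [Module F V] [AddCommGroup W] [Module F W]
    [FiniteDimensional F U] [FiniteDimensional F V] [FiniteDimensional F W]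
    (k n r : ℕ) (hU : Module.finrank F U = k) (hV : Module.finrank F V = n)
    (hW : n * (k - 1) + r < Module.finrank F W) :
    ∀ T : U ⊗[F] (V ⊗[F] W), MinrankLE T r ↔
      ∃ W' : Submodule F W, Module.finrank F W' = n * (k - 1) + r ∧
        ∃ T' : U ⊗[F] (V ⊗[F] W'), MinrankLE T' r ∧
          (TensorProduct.map (LinearMap.id (R := F) (M := U))
            (TensorProduct.map (LinearMap.id (R := F) (M := V)) W'.subtype)) T' = T := by
  intro T
  constructor
  · rintro ⟨x, hx, v', w', ht1⟩
    classical
    obtain ⟨u1, hu1⟩ := DFunLike.ne_iff.1 hx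
    rw [LinearMap.zero_apply] at hu1
    set u0 : U := (x u1)⁻¹ • u1 with hu0def
    have hu0 : x u0 = 1 := by simp [hu0def, inv_mul_cancel₀ hu1]
    set K := LinearMap.ker x with hKdef
    have hsurj : Function.Surjective x := fun c => ⟨c • u0, by simp [hu0]⟩
    have hm : finrank F K = k - 1 := by
      have h2 := LinearMap.finrank_range_add_finrank_ker x
      rw [LinearMap.range_eq_top.2 hsurj, finrank_top, finrank_self, hU, ← hKdef] at h2
      omega
    set bK := finBasis F K with hbKdef
    set P : U →ₗ[F] U := LinearMap.id - x.smulRight u0 with hPdef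
    have hPmem : ∀ u, P u ∈ K := fun u => by
      simp [hPdef, hKdef, LinearMap.mem_ker, hu0]
    set P₀ : U →ₗ[F] K := P.codRestrict K hPmem with hP₀def
    set T2 : K ⊗[F] (V ⊗[F] W) := TensorProduct.map P₀ LinearMap.id T with hT2def
    set s_ : Fin (finrank F K) → V ⊗[F] W := fun j => contractD (bK.coord j) T2 with hsdef
    have hdecomp : T2 = ∑ j, bK j ⊗ₜ[F] s_ j := tensor_decomp bK T2
    have hrk : ∀ j, Rank2LE (s_ j) n := fun j => hV ▸ rank2LE_finrank (s_ j)
    choose vj wj hs using hrk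
    set c : (Fin r ⊕ (Fin (finrank F K) × Fin n)) → W :=
      Sum.elim w' (fun p => wj p.1 p.2) with hcdef
    set W0 := Submodule.span F (Set.range c) with hW0def
    have hW0 : finrank F W0 ≤ n * (k - 1) + r := by
      calc finrank F W0 ≤ (Set.range c).toFinset.card := finrank_span_le_card _
        _ ≤ Fintype.card (Fin r ⊕ (Fin (finrank F K) × Fin n)) := by
            rw [Set.toFinset_card]; exact Fintype.card_range_le c
        _ = r + finrank F K * n := by simp
        _ = n * (k - 1) + r := by rw [hm]; ring
    obtain ⟨W', hle, hrank⟩ := exists_superspace W0 (n * (k - 1) + r) hW0 hW.le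
    have hmem : ∀ i, c i ∈ W' := fun i => hle (Submodule.subset_span ⟨i, rfl⟩)
    set w'₂ : Fin r → W' := fun i => ⟨w' i, hmem (Sum.inl i)⟩ with hw2def
    set wj₂ : Fin (finrank F K) → Fin n → W' :=
      fun j i => ⟨wj j i, hmem (Sum.inr (j, i))⟩ with hwj2def
    set T' : U ⊗[F] (V ⊗[F] W') :=
      u0 ⊗ₜ[F] (∑ i, v' i ⊗ₜ[F] w'₂ i) +
        ∑ j, ((bK j : K) : U) ⊗ₜ[F] (∑ i, vj j i ⊗ₜ[F] wj₂ j i) with hT'def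
    refine ⟨W', hrank, T', ⟨x, hx, v', w'₂, ?_⟩, ?_⟩
    · have hxbK : ∀ j, x ((bK j : K) : U) = 0 := fun j => (bK j).2
      simp [hT'def, map_add, map_sum, hu0, hxbK]
    · have hsum : x.smulRight u0 + P = LinearMap.id := by
        rw [hPdef]; abel
      have hA : u0 ⊗ₜ[F] contractD x T + TensorProduct.map P LinearMap.id T = T := by
        rw [← map_smulRight_eq x u0 T, ← LinearMap.add_apply, ← TensorProduct.map_add_left,
          hsum, TensorProduct.map_id, LinearMap.id_apply]
      have hcomp : K.subtype ∘ₗ P₀ = P := LinearMap.subtype_comp_codRestrict _ _ _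
      have hP2 : TensorProduct.map P LinearMap.id T
          = TensorProduct.map K.subtype LinearMap.id T2 := by
        rw [hT2def, ← LinearMap.comp_apply, ← TensorProduct.map_comp, hcomp,
          LinearMap.id_comp]
      conv_rhs => rw [← hA, hP2, hdecomp, ht1]
      simp [hT'def, map_add, map_sum, hs, hw2def, hwj2def]
  · rintro ⟨W', -, T', ⟨x, hx, v, w, hvw⟩, rfl⟩
    refine ⟨x, hx, v, fun i => (w i : W), ?_⟩
    rw [contractD_map, hvw]
    simp [map_sum]
end

section
/- Let $T \in U^* \otimes V^* \otimes W^*$ and let $M_{T,r}: S^{r+1}U \to \Lambda^{r+1}V^* \otimes \Lambda^{r+1}W^*$ be the linear map satisfying $M_{T,r}(x^{\otimes(r+1)}) = (Tx)^{\wedge(r+1)}$ for all $x \in U$. If $T$ has minrank at most $r$, then $\operatorname{rk} M_{T,r} < \dim S^{r+1}U = \binom{k+r}{r+1}$, i.e., all $\binom{k+r}{r+1} \times \binom{k+r}{r+1}$ minors of $M_{T,r}$ vanish. -/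
/-! The minors of `Tx` are homogeneous polynomials of degree `r + 1` in `x`, so
`x ↦ (Tx)^{∧(r+1)}` factors as a linear map `L` after the Veronese map `x ↦ x^{r+1} ∈ S^{r+1}U`.
If `rk (Tx₀) ≤ r` with `x₀ ≠ 0`, then `x₀^{r+1}` is a nonzero vector in `ker L`, so the span of
the minors matrices, which lies in `range L`, has dimension below `dim S^{r+1}U`. -/

open scoped BigOperators

/-- Contraction `Tx ∈ V^* ⊗ W^*` of `T ∈ U^* ⊗ V^* ⊗ W^*` against `x ∈ U`,
viewed as an `m × n` matrix. -/
noncomputable def contractT {α β γ : Type*} [Fintype α]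
    (T : α → β → γ → ℂ) (x : α → ℂ) : Matrix β γ ℂ :=
  Matrix.of fun j k => ∑ i, x i * T i j k

/-- The matrix of all `(r+1) × (r+1)` minors of a matrix `A`, i.e. `A^{∧(r+1)}`,
indexed by pairs of `(r+1)`-element subsets of the row and column index sets. -/
noncomputable def minorsMat {m n r : ℕ} (A : Matrix (Fin m) (Fin n) ℂ) :
    {s : Finset (Fin m) // s.card = r + 1} → {t : Finset (Fin n) // t.card = r + 1} → ℂ :=
  fun I J => (A.submatrix (fun p => I.1.orderEmbOfFin I.2 p)
    (fun p => J.1.orderEmbOfFin J.2 p)).det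

open Module Submodule

def Sym.ofFn {α : Type*} {d : ℕ} (f : Fin d → α) : Sym α d :=
  ⟨List.ofFn f, by simp⟩

section Veronese

variable {R κ : Type*} [CommSemiring R] {d : ℕ}

/-- `x^{⊗d}` in coordinates: `S^d` is identified with functions on monomials `Sym κ d`. -/
def veronese (d : ℕ) (x : κ → R) (s : Sym κ d) : R :=
  ((s : Multiset κ).map x).prod

lemma veronese_ofFn (x : κ → R) (f : Fin d → κ) : veronese d x (Sym.ofFn f) = ∏ p, x (f p) := by
  simp [veronese, Sym.ofFn, List.prod_ofFn]

lemma veronese_replicate (x : κ → R) (i : κ) : veronese d x (Sym.replicate d i) = x i ^ d := by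
  simp [veronese, Sym.coe_replicate]

lemma veronese_ne_zero [NoZeroDivisors R] {x : κ → R} (hx : x ≠ 0) : veronese d x ≠ 0 := by
  obtain ⟨i, hi⟩ := Function.ne_iff.mp hx
  exact Function.ne_iff.mpr
    ⟨Sym.replicate d i, by simpa [veronese_replicate] using pow_ne_zero d hi⟩

variable [Fintype κ] {M : Type*} [AddCommMonoid M] [Module R M]

def veroneseLift (c : (Fin d → κ) → M) : (Sym κ d → R) →ₗ[R] M :=
  Fintype.linearCombination R c ∘ₗ LinearMap.funLeft R R Sym.ofFn

lemma veroneseLift_veronese (c : (Fin d → κ) → M) (x : κ → R) :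
    veroneseLift c (veronese d x) = ∑ f, (∏ p, x (f p)) • c f := by
  simp [veroneseLift, Fintype.linearCombination_apply, LinearMap.funLeft_apply, veronese_ofFn]

end Veronese

theorem finrank_span_range_lt_of_eq_sum_prod_smul {K κ M : Type*} [Field K] [Fintype κ]
    [DecidableEq κ] [AddCommGroup M] [Module K M] {d : ℕ} (g : (κ → K) → M)
    (c : (Fin d → κ) → M) (hg : ∀ x, g x = ∑ f, (∏ p, x (f p)) • c f)
    {x₀ : κ → K} (hx₀ : x₀ ≠ 0) (hgx₀ : g x₀ = 0) :
    finrank K (span K (Set.range g)) < (Fintype.card κ + d - 1).choose d := by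
  set L : (Sym κ d → K) →ₗ[K] M := veroneseLift c
  have hL : ∀ x, L (veronese d x) = g x := fun x => by rw [veroneseLift_veronese, hg]
  have hspan : span K (Set.range g) ≤ LinearMap.range L :=
    span_le.mpr <| Set.range_subset_iff.mpr fun x => ⟨veronese d x, hL x⟩
  have hker : 0 < finrank K (LinearMap.ker L) :=
    Module.finrank_pos_iff_exists_ne_zero.mpr
      ⟨⟨veronese d x₀, by simp [hL, hgx₀]⟩, by simpa using veronese_ne_zero hx₀⟩
  calc finrank K (span K (Set.range g)) ≤ finrank K (LinearMap.range L) :=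
        Submodule.finrank_mono hspan
    _ < finrank K (Sym κ d → K) := by
        have := L.finrank_range_add_finrank_ker
        omega
    _ = (Fintype.card κ + d - 1).choose d := by
        rw [Module.finrank_fintype_fun_eq_card, Sym.card_sym_eq_choose]

theorem Matrix.det_sum_smul {R n κ : Type*} [CommRing R] [Fintype n] [DecidableEq n] [Fintype κ]
    (A : κ → Matrix n n R) (x : κ → R) :
    (∑ i, x i • A i).det = ∑ f : n → κ, (∏ p, x (f p)) • (Matrix.of fun p => A (f p) p).det := by
  have hrows : (∑ i, x i • A i) = fun p => ∑ i, x i • A i p := by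
    ext p q
    simp [Matrix.sum_apply]
  rw [hrows]
  change Matrix.detRowAlternating.toMultilinearMap _ = _
  rw [MultilinearMap.map_sum]
  refine Finset.sum_congr rfl fun f _ => ?_
  exact MultilinearMap.map_smul_univ _ _ _

theorem Matrix.det_submatrix_eq_zero_of_rank_lt {K m n ι : Type*} [Field K] [Fintype n]
    [Fintype ι] [DecidableEq ι] (A : Matrix m n K) (re : ι → m) (ce : ι → n)
    (h : A.rank < Fintype.card ι) : (A.submatrix re ce).det = 0 := by
  by_contra hdet
  have := Matrix.rank_of_det_ne_zero hdet
  have := A.rank_submatrix_le re ce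
  omega

lemma minorsMat_contractT_apply {k m n r : ℕ} (T : Fin k → Fin m → Fin n → ℂ) (x : Fin k → ℂ)
    (I : {s : Finset (Fin m) // s.card = r + 1}) (J : {t : Finset (Fin n) // t.card = r + 1}) :
    minorsMat (contractT T x) I J = ∑ f : Fin (r + 1) → Fin k, (∏ p, x (f p)) •
      (Matrix.of fun p q => T (f p) (I.1.orderEmbOfFin I.2 p) (J.1.orderEmbOfFin J.2 q)).det := by
  have hsub : (contractT T x).submatrix (I.1.orderEmbOfFin I.2) (J.1.orderEmbOfFin J.2) =
      ∑ i, x i • Matrix.of fun p q => T i (I.1.orderEmbOfFin I.2 p) (J.1.orderEmbOfFin J.2 q) := by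
    ext p q
    simp [contractT, Matrix.sum_apply]
  rw [minorsMat, hsub, Matrix.det_sum_smul]
  rfl

/-- If `T ∈ U^* ⊗ V^* ⊗ W^*` (with `dim U = k`) has minrank at most `r`, then the linear
map `M_{T,r} : S^{r+1} U → Λ^{r+1} V^* ⊗ Λ^{r+1} W^*`, determined by
`M_{T,r}(x^{⊗(r+1)}) = (Tx)^{∧(r+1)}`, has rank strictly less than
`dim S^{r+1} U = C(k+r, r+1)`; equivalently (since the powers `x^{⊗(r+1)}` span
`S^{r+1}U` over `ℂ`), the span of `{(Tx)^{∧(r+1)} : x ∈ U}` has dimension less than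
`C(k+r, r+1)`, i.e. all maximal minors of `M_{T,r}` vanish. -/
theorem stmt9 {k m n : ℕ} (r : ℕ) (T : Fin k → Fin m → Fin n → ℂ)
    (hT : ∃ x : Fin k → ℂ, x ≠ 0 ∧ (contractT T x).rank ≤ r) :
    Module.finrank ℂ (Submodule.span ℂ
      {M : {s : Finset (Fin m) // s.card = r + 1} →
            {t : Finset (Fin n) // t.card = r + 1} → ℂ |
        ∃ x : Fin k → ℂ, M = minorsMat (r := r) (contractT T x)}) <
    Nat.choose (k + r) (r + 1) := by
  obtain ⟨x₀, hx₀, hrank⟩ := hT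
  have hvanish : minorsMat (r := r) (contractT T x₀) = 0 := by
    ext I J
    exact Matrix.det_submatrix_eq_zero_of_rank_lt _ _ _ (by simpa [Nat.lt_succ_iff] using hrank)
  have hlt := finrank_span_range_lt_of_eq_sum_prod_smul
    (fun x => minorsMat (r := r) (contractT T x)) (fun f I J => (Matrix.of fun p q =>
      T (f p) (I.1.orderEmbOfFin I.2 p) (J.1.orderEmbOfFin J.2 q)).det)
    (fun x => by ext I J; simp [minorsMat_contractT_apply]) hx₀ hvanish
  have hset : {M | ∃ x, M = minorsMat (r := r) (contractT T x)} =
      Set.range fun x => minorsMat (r := r) (contractT T x) :=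
    Set.ext fun _ => exists_congr fun _ => eq_comm
  rw [hset]
  simpa using hlt
end
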